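/- The translation ⟪·⟫ respects the syntactic equality axioms of the CCV λμ-calculus: if M₁ = M₂ as CCV terms (i.e., they are identified by the associativity equalities for let and for jumps), then ⟪M₁⟫[K] = ⟪M₂⟫[K] for every continuation term K; likewise, if J₁ = J₂ as CCV jumps, then ⟪J₁⟫ = ⟪J₂⟫ (up to associativity of the dot operator). -/

import Mathlib

set_option maxHeartbeats 1000000

namespace CCV
mutual
inductive Tm : Type
| var (x : ℕ) : Tm
| lam (x : ℕ) (M : Tm) : Tm
| app (M N : Tm) : Tm
| lett (M : Tm) (x : ℕ) (N : Tm) : Tm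
| mu (k : ℕ) (J : Jm) : Tm
inductive Jm : Type
| jmp (k : ℕ) (M : Tm) : Jm
| lett (J : Jm) (x : ℕ) (N : Tm) : Jm
end
def IsValue : Tm → Prop
| .var _ => True
| .lam _ _ => True
| _ => False

def isVal : Tm → Bool
| .var _ => true
| .lam _ _ => true
| _ => false
mutual
def fvT : Tm → Finset ℕ
| .var x => {x}
| .lam x M => fvT M \ {x}
| .app M N => fvT M ∪ fvT N
| .lett M x N => (fvT M \ {x}) ∪ fvT N
| .mu _ J => fvJ J
def fvJ : Jm → Finset ℕ
| .jmp _ M => fvT M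
| .lett J x N => (fvJ J \ {x}) ∪ fvT N
end
mutual
def fcT : Tm → Finset ℕ
| .var _ => ∅
| .lam _ M => fcT M
| .app M N => fcT M ∪ fcT N
| .lett M _ N => fcT M ∪ fcT N
| .mu k J => fcJ J \ {k}
def fcJ : Jm → Finset ℕ
| .jmp k M => insert k (fcT M)
| .lett J _ N => fcJ J ∪ fcT N
end
mutual
def subT : Tm → ℕ → Tm → Tm
| .var y, x, V => if y = x then V else .var y
| .lam y M, x, V => if y = x then .lam y M else .lam y (subT M x V)
| .app M N, x, V => .app (subT M x V) (subT N x V)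
| .lett M y N, x, V => .lett (if y = x then M else subT M x V) y (subT N x V)
| .mu k J, x, V => .mu k (subJ J x V)
def subJ : Jm → ℕ → Tm → Jm
| .jmp k M, x, V => .jmp k (subT M x V)
| .lett J y N, x, V => .lett (if y = x then J else subJ J x V) y (subT N x V)
end
mutual
def renKT : Tm → ℕ → ℕ → Tm
| .var y, _, _ => .var y
| .lam y M, k, l => .lam y (renKT M k l)
| .app M N, k, l => .app (renKT M k l) (renKT N k l)
| .lett M y N, k, l => .lett (renKT M k l) y (renKT N k l)
| .mu m J, k, l => if m = k then .mu m J else .mu m (renKJ J k l)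
def renKJ : Jm → ℕ → ℕ → Jm
| .jmp m M, k, l => .jmp (if m = k then l else m) (renKT M k l)
| .lett J y N, k, l => .lett (renKJ J k l) y (renKT N k l)
end
mutual
def csubT : Tm → ℕ → Tm → ℕ → Tm
| .var y, _, _, _ => .var y
| .lam y P, k, M, x => .lam y (csubT P k M x)
| .app P Q, k, M, x => .app (csubT P k M x) (csubT Q k M x)
| .lett P y Q, k, M, x => .lett (csubT P k M x) y (csubT Q k M x)
| .mu m J, k, M, x => if m = k then .mu m J else .mu m (csubJ J k M x)
def csubJ : Jm → ℕ → Tm → ℕ → Jm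
| .jmp m P, k, M, x =>
    if m = k then .jmp m (.lett M x (csubT P k M x)) else .jmp m (csubT P k M x)
| .lett J y Q, k, M, x => .lett (csubJ J k M x) y (csubT Q k M x)
end
mutual
inductive EqT : Tm → Tm → Prop
| refl (M) : EqT M M
| symm : EqT M N → EqT N M
| trans : EqT M N → EqT N P → EqT M P
| assoc (L : Tm) (x : ℕ) (M : Tm) (y : ℕ) (N : Tm) :
    y ∉ fvT L → EqT (.lett L x (.lett M y N)) (.lett (.lett L x M) y N)
| lam : EqT M M' → EqT (.lam x M) (.lam x M')
| app : EqT M M' → EqT N N' → EqT (.app M N) (.app M' N')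
| lett : EqT M M' → EqT N N' → EqT (.lett M x N) (.lett M' x N')
| mu : EqJ J J' → EqT (.mu k J) (.mu k J')
inductive EqJ : Jm → Jm → Prop
| refl (J) : EqJ J J
| symm : EqJ J J' → EqJ J' J
| trans : EqJ J J' → EqJ J' J'' → EqJ J J''
| assoc (k : ℕ) (L : Tm) (x : ℕ) (M : Tm) :
    EqJ (.jmp k (.lett L x M)) (.lett (.jmp k L) x M)
| jmp : EqT M M' → EqJ (.jmp k M) (.jmp k M')
| lett : EqJ J J' → EqT N N' → EqJ (.lett J x N) (.lett J' x N')
end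

mutual
/-- one-step reduction of the CCV λμ-calculus (on terms). -/
inductive RedT : Tm → Tm → Prop
| ad1 : ¬ IsValue N → z ∉ fvT N → z ∉ fvT M →
    RedT (.app N M) (.lett (.app (.var z) M) z N)
| ad2 : IsValue V → ¬ IsValue N → z ∉ fvT V → z ∉ fvT N →
    RedT (.app V N) (.lett (.app V (.var z)) z N)
| beta_lam : IsValue V → RedT (.app (.lam x M) V) (.lett M x V)
| beta_let : IsValue V → RedT (.lett M x V) (subT M x V)
| beta_mu : k ∉ fcT M → RedT (.lett M x (.mu k J)) (.mu k (csubJ J k M x))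
| eta_lam : IsValue V → x ∉ fvT V → RedT (.lam x (.app V (.var x))) V
| eta_let : RedT (.lett (.var x) x M) M
| eta_mu : k ∉ fcT M → RedT (.mu k (.jmp k M)) M
| exch : k ∉ fcT M → RedT (.lett (.mu k J) x M) (.mu k (.lett J x M))
| lam : RedT M M' → RedT (.lam x M) (.lam x M')
| appl : RedT M M' → RedT (.app M N) (.app M' N)
| appr : RedT N N' → RedT (.app M N) (.app M N')
| lettl : RedT M M' → RedT (.lett M x N) (.lett M' x N)
| lettr : RedT N N' → RedT (.lett M x N) (.lett M x N')
| mu : RedJ J J' → RedT (.mu k J) (.mu k J')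
| eq : EqT M M₁ → RedT M₁ N₁ → EqT N₁ N → RedT M N
/-- one-step reduction on jumps. -/
inductive RedJ : Jm → Jm → Prop
| beta_jmp : RedJ (.jmp l (.mu k J)) (renKJ J k l)
| jmp : RedT M M' → RedJ (.jmp k M) (.jmp k M')
| lettl : RedJ J J' → RedJ (.lett J x N) (.lett J' x N)
| lettr : RedT N N' → RedJ (.lett J x N) (.lett J x N')
| eq : EqJ J J₁ → RedJ J₁ J₁' → EqJ J₁' J' → RedJ J J'
end

/-- strong normalization of `a` w.r.t. relation `r`. -/
def SNrel {α : Sort*} (r : α → α → Prop) (a : α) : Prop :=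
  Acc (fun x y => r y x) a
mutual
/-- one-step reduction by rules βμ, βjmp, ημ only. -/
inductive MRedT : Tm → Tm → Prop
| beta_mu : k ∉ fcT M → MRedT (.lett M x (.mu k J)) (.mu k (csubJ J k M x))
| eta_mu : k ∉ fcT M → MRedT (.mu k (.jmp k M)) M
| lam : MRedT M M' → MRedT (.lam x M) (.lam x M')
| appl : MRedT M M' → MRedT (.app M N) (.app M' N)
| appr : MRedT N N' → MRedT (.app M N) (.app M N')
| lettl : MRedT M M' → MRedT (.lett M x N) (.lett M' x N)
| lettr : MRedT N N' → MRedT (.lett M x N) (.lett M x N')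
| mu : MRedJ J J' → MRedT (.mu k J) (.mu k J')
| eq : EqT M M₁ → MRedT M₁ N₁ → EqT N₁ N → MRedT M N
inductive MRedJ : Jm → Jm → Prop
| beta_jmp : MRedJ (.jmp l (.mu k J)) (renKJ J k l)
| jmp : MRedT M M' → MRedJ (.jmp k M) (.jmp k M')
| lettl : MRedJ J J' → MRedJ (.lett J x N) (.lett J' x N)
| lettr : MRedT N N' → MRedJ (.lett J x N) (.lett J x N')
| eq : EqJ J J₁ → MRedJ J₁ J₁' → EqJ J₁' J' → MRedJ J J'
end

mutual
/-- one-step reduction by the non-η rules (ad1, ad2, βλ, βlet, βμ, βjmp, exch). -/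
inductive NRedT : Tm → Tm → Prop
| ad1 : ¬ IsValue N → z ∉ fvT N → z ∉ fvT M →
    NRedT (.app N M) (.lett (.app (.var z) M) z N)
| ad2 : IsValue V → ¬ IsValue N → z ∉ fvT V → z ∉ fvT N →
    NRedT (.app V N) (.lett (.app V (.var z)) z N)
| beta_lam : IsValue V → NRedT (.app (.lam x M) V) (.lett M x V)
| beta_let : IsValue V → NRedT (.lett M x V) (subT M x V)
| beta_mu : k ∉ fcT M → NRedT (.lett M x (.mu k J)) (.mu k (csubJ J k M x))
| exch : k ∉ fcT M → NRedT (.lett (.mu k J) x M) (.mu k (.lett J x M))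
| lam : NRedT M M' → NRedT (.lam x M) (.lam x M')
| appl : NRedT M M' → NRedT (.app M N) (.app M' N)
| appr : NRedT N N' → NRedT (.app M N) (.app M N')
| lettl : NRedT M M' → NRedT (.lett M x N) (.lett M' x N)
| lettr : NRedT N N' → NRedT (.lett M x N) (.lett M x N')
| mu : NRedJ J J' → NRedT (.mu k J) (.mu k J')
| eq : EqT M M₁ → NRedT M₁ N₁ → EqT N₁ N → NRedT M N
inductive NRedJ : Jm → Jm → Prop
| beta_jmp : NRedJ (.jmp l (.mu k J)) (renKJ J k l)
| jmp : NRedT M M' → NRedJ (.jmp k M) (.jmp k M')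
| lettl : NRedJ J J' → NRedJ (.lett J x N) (.lett J' x N)
| lettr : NRedT N N' → NRedJ (.lett J x N) (.lett J x N')
| eq : EqJ J J₁ → NRedJ J₁ J₁' → EqJ J₁' J' → NRedJ J J'
end

/-- a top-level (root) instance of one of the nine term-level reduction rules. -/
inductive TopRed : Tm → Tm → Prop
| ad1 : ¬ IsValue N → z ∉ fvT N → z ∉ fvT M →
    TopRed (.app N M) (.lett (.app (.var z) M) z N)
| ad2 : IsValue V → ¬ IsValue N → z ∉ fvT V → z ∉ fvT N →
    TopRed (.app V N) (.lett (.app V (.var z)) z N)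
| beta_lam : IsValue V → TopRed (.app (.lam x M) V) (.lett M x V)
| beta_let : IsValue V → TopRed (.lett M x V) (subT M x V)
| beta_mu : k ∉ fcT M → TopRed (.lett M x (.mu k J)) (.mu k (csubJ J k M x))
| eta_lam : IsValue V → x ∉ fvT V → TopRed (.lam x (.app V (.var x))) V
| eta_let : TopRed (.lett (.var x) x M) M
| eta_mu : k ∉ fcT M → TopRed (.mu k (.jmp k M)) M
| exch : k ∉ fcT M → TopRed (.lett (.mu k J) x M) (.mu k (.lett J x M))

/-- a root rule instance, with βjmp taken in the form `μm.[l]μk.J → μm.J{l/k}`. -/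
inductive RootR : Tm → Tm → Prop
| top : TopRed R S → RootR R S
| jmpwrap (m l k : ℕ) (J : Jm) :
    RootR (.mu m (.jmp l (.mu k J))) (.mu m (renKJ J k l))

/-- evaluation contexts `E ::= □ | E[V □] | E[□ M] | E[(M where x := □)]`. -/
inductive ECtx : Type
| hole : ECtx
| appV (E : ECtx) (V : Tm) (h : IsValue V) : ECtx
| appM (E : ECtx) (N : Tm) : ECtx
| lettArg (E : ECtx) (M : Tm) (x : ℕ) : ECtx

/-- plugging a term into an evaluation context. -/
def fill : ECtx → Tm → Tm
| .hole, M => M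
| .appV E V _, M => fill E (.app V M)
| .appM E N, M => fill E (.app M N)
| .lettArg E L x, M => fill E (.lett L x M)
mutual
inductive RTy : Type
| atom (n : ℕ) : RTy
| arrow (S : STy) (T : TTy) : RTy
inductive STy : Type
| single (R : RTy) : STy
| inter (R : RTy) (S : STy) : STy
inductive TTy : Type
| single (S : STy) : TTy
| union (S : STy) (T : TTy) : TTy
end
mutual
inductive SubR : RTy → RTy → Prop
| atom (n : ℕ) : SubR (.atom n) (.atom n)
| arrow : SubS S' S → SubT T T' → SubR (.arrow S T) (.arrow S' T')
inductive SubSR : STy → RTy → Prop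
| head1 : SubR R R' → SubSR (.single R) R'
| head : SubR R R' → SubSR (.inter R S) R'
| tail : SubSR S R' → SubSR (.inter R S) R'
inductive SubS : STy → STy → Prop
| single : SubSR S R' → SubS S (.single R')
| inter : SubSR S R' → SubS S S' → SubS S (.inter R' S')
inductive SubTS : STy → TTy → Prop
| head1 : SubS S S' → SubTS S (.single S')
| head : SubS S S' → SubTS S (.union S' T')
| tail : SubTS S T' → SubTS S (.union S' T')
inductive SubT : TTy → TTy → Prop
| single : SubTS S T' → SubT (.single S) T'
| union : SubTS S T' → SubT T T' → SubT (.union S T) T'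
end

/-- a nonempty intersection `⋂ (R :: l)` -/
def interList : RTy → List RTy → STy
| R, [] => .single R
| R, R' :: l => .inter R (interList R' l)

/-- a nonempty union `⋃ (S :: l)` -/
def unionList : STy → List STy → TTy
| S, [] => .single S
| S, S' :: l => .union S (unionList S' l)

/-- `⋂_i (Sᵢ → T)` for the family given by `hd :: tl`. -/
def arrowsInter (T : TTy) (hd : STy) (tl : List STy) : STy :=
  interList (.arrow hd T) (tl.map fun S => .arrow S T)

def upd {α : Type} (f : ℕ → Option α) (x : ℕ) (v : Option α) : ℕ → Option α :=
  fun y => if y = x then v else f y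

mutual
/-- The union-intersection typing judgment `Γ ⊢ M : T | Δ`. -/
inductive TyT : (ℕ → Option STy) → (ℕ → Option TTy) → Tm → TTy → Prop
| var : Γ x = some S → TyT Γ Δ (.var x) (.single S)
| lam (hd : STy × TTy) (tl : List (STy × TTy)) :
    (∀ p ∈ hd :: tl, TyT (upd Γ x (some p.1)) Δ M p.2) →
    TyT Γ Δ (.lam x M) (.single (interList (.arrow hd.1 hd.2)
      (tl.map fun p => .arrow p.1 p.2)))
| app (hd : STy × List STy) (tl : List (STy × List STy)) :
    TyT Γ Δ M (unionList (arrowsInter T hd.1 hd.2)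
      (tl.map fun p => arrowsInter T p.1 p.2)) →
    (∀ p ∈ hd :: tl, TyT Γ Δ N (unionList p.1 p.2)) →
    TyT Γ Δ (.app M N) T
| lett (hd : STy) (tl : List STy) :
    (∀ S ∈ hd :: tl, TyT (upd Γ x (some S)) Δ M T) →
    TyT Γ Δ N (unionList hd tl) →
    TyT Γ Δ (.lett M x N) T
| mu : TyJ Γ (upd Δ k (some T)) J → TyT Γ Δ (.mu k J) T
| sub : TyT Γ Δ M T → SubT T T' → TyT Γ Δ M T'
| eq : EqT M M' → TyT Γ Δ M' T → TyT Γ Δ M T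
/-- The judgment `Γ ⊢ J : ⊥⊥ | Δ` for jumps. -/
inductive TyJ : (ℕ → Option STy) → (ℕ → Option TTy) → Jm → Prop
| jmp : Δ k = some T → TyT Γ Δ M T → TyJ Γ Δ (.jmp k M)
| lett (hd : STy) (tl : List STy) :
    (∀ S ∈ hd :: tl, TyJ (upd Γ x (some S)) Δ J) →
    TyT Γ Δ N (unionList hd tl) →
    TyJ Γ Δ (.lett J x N)
| eq : EqJ J J' → TyJ Γ Δ J' → TyJ Γ Δ J
end
/-! ### The sorted target calculus -/
mutual
inductive TgT : Type
| lamk (k : ℕ) (Q : TgQ) : TgT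
| app (W W' : TgW) : TgT
inductive TgQ : Type
| kw (K : TgK) (W : TgW) : TgQ
| tk (T : TgT) (K : TgK) : TgQ
inductive TgW : Type
| var (x : ℕ) : TgW
| lam (x : ℕ) (T : TgT) : TgW
inductive TgK : Type
| kvar (k : ℕ) : TgK
| lam (x : ℕ) (Q : TgQ) : TgK
end

mutual
def fvtT : TgT → Finset ℕ
| .lamk _ Q => fvtQ Q
| .app W W' => fvtW W ∪ fvtW W'
def fvtQ : TgQ → Finset ℕ
| .kw K W => fvtK K ∪ fvtW W
| .tk T K => fvtT T ∪ fvtK K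
def fvtW : TgW → Finset ℕ
| .var x => {x}
| .lam x T => fvtT T \ {x}
def fvtK : TgK → Finset ℕ
| .kvar _ => ∅
| .lam x Q => fvtQ Q \ {x}
end

mutual
def fktT : TgT → Finset ℕ
| .lamk k Q => fktQ Q \ {k}
| .app W W' => fktW W ∪ fktW W'
def fktQ : TgQ → Finset ℕ
| .kw K W => fktK K ∪ fktW W
| .tk T K => fktT T ∪ fktK K
def fktW : TgW → Finset ℕ
| .var _ => ∅
| .lam _ T => fktT T
def fktK : TgK → Finset ℕ
| .kvar k => {k}
| .lam _ Q => fktQ Q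
end

mutual
def wsT : TgT → ℕ → TgW → TgT
| .lamk k Q, x, W => .lamk k (wsQ Q x W)
| .app W₁ W₂, x, W => .app (wsW W₁ x W) (wsW W₂ x W)
def wsQ : TgQ → ℕ → TgW → TgQ
| .kw K W', x, W => .kw (wsK K x W) (wsW W' x W)
| .tk T K, x, W => .tk (wsT T x W) (wsK K x W)
def wsW : TgW → ℕ → TgW → TgW
| .var y, x, W => if y = x then W else .var y
| .lam y T, x, W => if y = x then .lam y T else .lam y (wsT T x W)
def wsK : TgK → ℕ → TgW → TgK
| .kvar k, _, _ => .kvar k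
| .lam y Q, x, W => if y = x then .lam y Q else .lam y (wsQ Q x W)
end

mutual
def ksT : TgT → ℕ → TgK → TgT
| .lamk m Q, k, K => if m = k then .lamk m Q else .lamk m (ksQ Q k K)
| .app W₁ W₂, k, K => .app (ksW W₁ k K) (ksW W₂ k K)
def ksQ : TgQ → ℕ → TgK → TgQ
| .kw K' W, k, K => .kw (ksK K' k K) (ksW W k K)
| .tk T K', k, K => .tk (ksT T k K) (ksK K' k K)
def ksW : TgW → ℕ → TgK → TgW
| .var y, _, _ => .var y
| .lam y T, k, K => .lam y (ksT T k K)
def ksK : TgK → ℕ → TgK → TgK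
| .kvar m, k, K => if m = k then K else .kvar m
| .lam y Q, k, K => .lam y (ksQ Q k K)
end

mutual
/-- βη-reduction (β-only if `eta = false`) in the sorted target calculus: terms. -/
inductive StT (eta : Bool) : TgT → TgT → Prop
| etaT : eta = true → k ∉ fktT T → StT eta (.lamk k (.tk T (.kvar k))) T
| lamk : StQ eta Q Q' → StT eta (.lamk k Q) (.lamk k Q')
| appl : StW eta W W' → StT eta (.app W W₂) (.app W' W₂)
| appr : StW eta W W' → StT eta (.app W₁ W) (.app W₁ W')
inductive StQ (eta : Bool) : TgQ → TgQ → Prop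
| betaK : StQ eta (.kw (.lam x Q) W) (wsQ Q x W)
| betaT : StQ eta (.tk (.lamk k Q) K) (ksQ Q k K)
| kwl : StK eta K K' → StQ eta (.kw K W) (.kw K' W)
| kwr : StW eta W W' → StQ eta (.kw K W) (.kw K W')
| tkl : StT eta T T' → StQ eta (.tk T K) (.tk T' K)
| tkr : StK eta K K' → StQ eta (.tk T K) (.tk T K')
inductive StW (eta : Bool) : TgW → TgW → Prop
| etaW : eta = true → x ∉ fvtW W → StW eta (.lam x (.app W (.var x))) W
| lam : StT eta T T' → StW eta (.lam x T) (.lam x T')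
inductive StK (eta : Bool) : TgK → TgK → Prop
| etaK : eta = true → x ∉ fvtK K → StK eta (.lam x (.kw K (.var x))) K
| lam : StQ eta Q Q' → StK eta (.lam x Q) (.lam x Q')
end

/-- a fresh ordinary variable for the translation of applications -/
def fx (M N : Tm) (K : TgK) : ℕ := ((fvT M ∪ fvT N ∪ fvtK K).sup id) + 1

mutual
/-- the value translation `V*` (junk on non-values). -/
def star : Tm → TgW
| .var x => .var x
| .lam x M => .lam x (.lamk ((fcT M).sup id + 1) (colon M (.kvar ((fcT M).sup id + 1))))
| _ => .var 0
/-- the colon translation `⌊M⌋[K]`. -/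
def colon : Tm → TgK → TgQ
| .var x, K => .kw K (.var x)
| .lam x M, K => .kw K (star (.lam x M))
| .app M N, K =>
    if isVal M then
      if isVal N then .tk (.app (star M) (star N)) K
      else colon N (.lam (fx M N K) (.tk (.app (star M) (.var (fx M N K))) K))
    else
      if isVal N then colon M (.lam (fx M N K) (.tk (.app (.var (fx M N K)) (star N)) K))
      else colon M (.lam (fx M N K)
        (colon N (.lam (fx M N K + 1)
          (.tk (.app (.var (fx M N K)) (.var (fx M N K + 1))) K))))
| .lett L x N, K => colon N (.lam x (colon L K))
| .mu k J, K => .tk (.lamk k (colonJ J)) K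
/-- the colon translation `⌊J⌋` of jumps. -/
def colonJ : Jm → TgQ
| .jmp k M => colon M (.kvar k)
| .lett J x N => colon N (.lam x (colonJ J))
end

/-- the CPS translation `[[M]] = λk.⌊M⌋[k]`. -/
def cps (M : Tm) : TgT :=
  .lamk ((fcT M).sup id + 1) (colon M (.kvar ((fcT M).sup id + 1)))
/-! ### The untyped λ-calculus extended with an associative dot operator.
Variables are coded: ordinary `x ↦ 3x`, continuation `k ↦ 3k+1`,
and the tilde companion `k̃ ↦ 3k+2`. -/
inductive Lam : Type
| var (x : ℕ) : Lam
| lam (x : ℕ) (M : Lam) : Lam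
| app (M N : Lam) : Lam
| dot (M N : Lam) : Lam

def fvL : Lam → Finset ℕ
| .var x => {x}
| .lam x M => fvL M \ {x}
| .app M N => fvL M ∪ fvL N
| .dot M N => fvL M ∪ fvL N

/-- parallel (capture-naive) substitution. -/
def psub : Lam → (ℕ → Option Lam) → Lam
| .var x, ρ => (ρ x).getD (.var x)
| .lam x M, ρ => .lam x (psub M (fun y => if y = x then none else ρ y))
| .app M N, ρ => .app (psub M ρ) (psub N ρ)
| .dot M N, ρ => .dot (psub M ρ) (psub N ρ)

def sub1 (M : Lam) (x : ℕ) (N : Lam) : Lam :=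
  psub M (fun y => if y = x then some N else none)

/-- syntactic associativity of the dot operator (congruence-equivalence closure). -/
inductive DEq : Lam → Lam → Prop
| refl (M) : DEq M M
| symm : DEq M N → DEq N M
| trans : DEq M N → DEq N P → DEq M P
| assoc (L M N) : DEq (.dot (.dot L M) N) (.dot L (.dot M N))
| lam : DEq M M' → DEq (.lam x M) (.lam x M')
| appl : DEq M M' → DEq N N' → DEq (.app M N) (.app M' N')
| dot : DEq M M' → DEq N N' → DEq (.dot M N) (.dot M' N')

/-- βη-reduction together with dot-elimination `M·N → N`,
    on dot-associativity classes. -/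
inductive LStep : Lam → Lam → Prop
| beta : LStep (.app (.lam x M) N) (sub1 M x N)
| eta : x ∉ fvL M → LStep (.lam x (.app M (.var x))) M
| dotElim (M N) : LStep (.dot M N) N
| lam : LStep M M' → LStep (.lam x M) (.lam x M')
| appl : LStep M M' → LStep (.app M N) (.app M' N)
| appr : LStep N N' → LStep (.app M N) (.app M N')
| dotl : LStep M M' → LStep (.dot M N) (.dot M' N)
| dotr : LStep N N' → LStep (.dot M N) (.dot M N')
| deq : DEq M M₁ → LStep M₁ N₁ → DEq N₁ N → LStep M N

/-- `K̃`: the tilde companion of a continuation term. -/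
def til : Lam → Lam
| .var v => .var (v + 1)
| .lam _ Q => Q
| M => M

/-- continuation terms of the extended target language. -/
def IsCont (K : Lam) : Prop :=
  (∃ k : ℕ, K = .var (3 * k + 1)) ∨ (∃ (x : ℕ) (Q : Lam), K = .lam (3 * x) Q)

/-- `W K K̃ W'` -/
def appW (W K W' : Lam) : Lam := .app (.app (.app W K) (til K)) W'

/-- a fresh ordinary variable -/
def zf (M N : Tm) (K : Lam) : ℕ :=
  (fvT M).sup id + (fvT N).sup id + (fvL K).sup id + 1

mutual
/-- the value translation `V*` of Def. 2.9 (junk on non-values). -/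
def starb : Tm → Lam
| .var x => .var (3 * x)
| .lam x M =>
    let kk := (fcT M).sup id + 1
    .lam (3 * kk + 1) (.lam (3 * kk + 2) (.lam (3 * x)
      (.dot (trb M (.var (3 * kk + 1)))
        (.app (.lam (3 * x) (.dot (.var (3 * kk + 2)) (trb M (.var (3 * kk + 1)))))
          (.var (3 * x))))))
| _ => .var 0
/-- the translation `⟪M⟫[K]`. -/
def trb : Tm → Lam → Lam
| .var x, K => .app K (.var (3 * x))
| .lam x M, K => .app K (starb (.lam x M))
| .app M N, K =>
    if isVal M then
      if isVal N then appW (starb M) K (starb N)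
      else
        let z := zf M N K
        let Q' := appW (starb M) K (.var (3 * z))
        .dot (til K) (.dot Q' (trb N (.lam (3 * z) (.dot (til K) Q'))))
    else
      let z := zf M N K
      let ZQ :=
        if isVal N then appW (.var (3 * z)) K (starb N)
        else
          let w := z + 1
          let Q'' := appW (.var (3 * z)) K (.var (3 * w))
          .dot (til K) (.dot Q'' (trb N (.lam (3 * w) (.dot (til K) Q''))))
      .dot (til K) (.dot ZQ (trb M (.lam (3 * z) (.dot (til K) ZQ))))
| .lett L x N, K =>
    .dot (trb L K) (trb N (.lam (3 * x) (.dot (til K) (trb L K))))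
| .mu k J, K =>
    .dot (til K) (psub (trbJ J)
      (fun v => if v = 3 * k + 1 then some K
                else if v = 3 * k + 2 then some (til K) else none))
/-- the translation `⟪J⟫` of jumps. -/
def trbJ : Jm → Lam
| .jmp k M => .dot (.var (3 * k + 2)) (trb M (.var (3 * k + 1)))
| .lett J x N => .dot (trbJ J) (trb N (.lam (3 * x) (trbJ J)))
end

/-- prepend an optional ("possibly void") jump with the dot operator. -/
def odot : Option Lam → Lam → Lam
| none, P => P
| some Q, P => .dot Q P

/-! ### Intersection types for the extended λ-calculus (no empty intersection). -/
mutual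
inductive ISt : Type
| atom (n : ℕ) : ISt
| bot : ISt
| arrow (t : ITy) (s : ISt) : ISt
inductive ITy : Type
| single (s : ISt) : ITy
| inter (s : ISt) (t : ITy) : ITy
end

def memI : ISt → ITy → Prop
| s, .single s' => s = s'
| s, .inter s' t => s = s' ∨ memI s t

mutual
inductive ISubS : ISt → ISt → Prop
| atom (n : ℕ) : ISubS (.atom n) (.atom n)
| bot : ISubS .bot .bot
| arrow : ISubT t' t → ISubS s s' → ISubS (.arrow t s) (.arrow t' s')
inductive ISubTS : ITy → ISt → Prop
| head1 : ISubS s s' → ISubTS (.single s) s'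
| head : ISubS s s' → ISubTS (.inter s t) s'
| tail : ISubTS t s' → ISubTS (.inter s t) s'
inductive ISubT : ITy → ITy → Prop
| single : ISubTS t s' → ISubT t (.single s')
| inter : ISubTS t s' → ISubT t t' → ISubT t (.inter s' t')
end

/-- the intersection type system of the extended λ-calculus with the dot rule. -/
inductive ITJ : (ℕ → Option ITy) → Lam → ISt → Prop
| var : Γ x = some t → memI s t → ITJ Γ (.var x) s
| lam : ITJ (upd Γ x (some t)) M s → ITJ Γ (.lam x M) (.arrow t s)
| app : ITJ Γ M (.arrow t s) → (∀ s', memI s' t → ITJ Γ N s') → ITJ Γ (.app M N) s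
| dot : ITJ Γ M .bot → ITJ Γ N .bot → ITJ Γ (.dot M N) .bot
| sub : ITJ Γ M s → ISubS s s' → ITJ Γ M s'
| deq : DEq M M' → ITJ Γ M' s → ITJ Γ M s

mutual
def CompS : ISt → Set Lam
| .atom _ => {M | SNrel LStep M}
| .bot => {M | SNrel LStep M}
| .arrow t s => {M | ∀ N ∈ CompT t, Lam.app M N ∈ CompS s}
def CompT : ITy → Set Lam
| .single s => CompS s
| .inter s t => CompS s ∩ CompT t
end

mutual
/-- `R*` -/
def trR : RTy → ISt
| .atom n => .atom n
| .arrow S T => .arrow (trTp T) (.arrow (.single .bot) (.arrow (trS S) .bot))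
/-- `S*` -/
def trS : STy → ITy
| .single R => .single (trR R)
| .inter R S => .inter (trR R) (trS S)
/-- `T⁺ = ⋂ ¬S*` -/
def trTp : TTy → ITy
| .single S => .single (.arrow (trS S) .bot)
| .union S T => .inter (.arrow (trS S) .bot) (trTp T)
end
/-! ### sorted intersection types for the target calculus -/
mutual
inductive SSg : Type          -- strict value types σ
| atom (n : ℕ) : SSg
| arrow (s : SSgI) (t : STa) : SSg
inductive SSgI : Type         -- σ̲ = ⋂σ
| single (g : SSg) : SSgI
| inter (g : SSg) (s : SSgI) : SSgI
inductive SKa : Type          -- continuation types κ = ¬σ̲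
| neg (s : SSgI) : SKa
inductive SKaI : Type         -- κ̲ = ⋂κ
| single (k : SKa) : SKaI
| inter (k : SKa) (t : SKaI) : SKaI
inductive STa : Type          -- term types τ = ¬κ̲
| neg (k : SKaI) : STa
end

def memSg : SSg → SSgI → Prop
| g, .single g' => g = g'
| g, .inter g' s => g = g' ∨ memSg g s

def memKa : SKa → SKaI → Prop
| k, .single k' => k = k'
| k, .inter k' t => k = k' ∨ memKa k t

mutual
inductive SubSg : SSg → SSg → Prop
| atom (n : ℕ) : SubSg (.atom n) (.atom n)
| arrow : SubSgI s' s → SubTa t t' → SubSg (.arrow s t) (.arrow s' t')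
inductive SubSgIm : SSgI → SSg → Prop
| head1 : SubSg g g' → SubSgIm (.single g) g'
| head : SubSg g g' → SubSgIm (.inter g s) g'
| tail : SubSgIm s g' → SubSgIm (.inter g s) g'
inductive SubSgI : SSgI → SSgI → Prop
| single : SubSgIm s g' → SubSgI s (.single g')
| inter : SubSgIm s g' → SubSgI s s' → SubSgI s (.inter g' s')
inductive SubKa : SKa → SKa → Prop
| neg : SubSgI s' s → SubKa (.neg s) (.neg s')
inductive SubKaIm : SKaI → SKa → Prop
| head1 : SubKa k k' → SubKaIm (.single k) k'
| head : SubKa k k' → SubKaIm (.inter k t) k'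
| tail : SubKaIm t k' → SubKaIm (.inter k t) k'
inductive SubKaI : SKaI → SKaI → Prop
| single : SubKaIm t k' → SubKaI t (.single k')
| inter : SubKaIm t k' → SubKaI t t' → SubKaI t (.inter k' t')
inductive SubTa : STa → STa → Prop
| neg : SubKaI k' k → SubTa (.neg k) (.neg k')
end

mutual
/-- sorted intersection typing for target terms. -/
inductive JT : (ℕ → Option SSgI) → (ℕ → Option SKaI) → TgT → STa → Prop
| lamk : JQ Pe (upd Θ k (some kk)) Q → JT Pe Θ (.lamk k Q) (.neg kk)
| app : JW Pe Θ W (.arrow s t) → (∀ g, memSg g s → JW Pe Θ W' g) →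
    JT Pe Θ (.app W W') t
| sub : JT Pe Θ T t → SubTa t t' → JT Pe Θ T t'
/-- sorted typing of jumps at `⊥⊥`. -/
inductive JQ : (ℕ → Option SSgI) → (ℕ → Option SKaI) → TgQ → Prop
| kw : JK Pe Θ K (.neg s) → (∀ g, memSg g s → JW Pe Θ W g) → JQ Pe Θ (.kw K W)
| tk : JT Pe Θ T (.neg kk) → (∀ κ, memKa κ kk → JK Pe Θ K κ) → JQ Pe Θ (.tk T K)
/-- sorted typing of values. -/
inductive JW : (ℕ → Option SSgI) → (ℕ → Option SKaI) → TgW → SSg → Prop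
| var : Pe x = some s → memSg g s → JW Pe Θ (.var x) g
| lam : JT (upd Pe x (some s)) Θ T t → JW Pe Θ (.lam x T) (.arrow s t)
| sub : JW Pe Θ W g → SubSg g g' → JW Pe Θ W g'
/-- sorted typing of continuations. -/
inductive JK : (ℕ → Option SSgI) → (ℕ → Option SKaI) → TgK → SKa → Prop
| kvar : Θ k = some kk → memKa κ kk → JK Pe Θ (.kvar k) κ
| lam : JQ (upd Pe x (some s)) Θ Q → JK Pe Θ (.lam x Q) (.neg s)
| sub : JK Pe Θ K κ → SubKa κ κ' → JK Pe Θ K κ'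
end
/-! ### Places, visions, breadths and sights (cf. §2.1). -/

/-- the children of a node of the syntax tree. -/
def childs : Tm ⊕ Jm → List (Tm ⊕ Jm)
| .inl (.var _) => []
| .inl (.lam _ M) => [.inl M]
| .inl (.app M N) => [.inl M, .inl N]
| .inl (.lett M _ N) => [.inl M, .inl N]
| .inl (.mu _ J) => [.inr J]
| .inr (.jmp _ M) => [.inl M]
| .inr (.lett J _ N) => [.inr J, .inl N]

/-- the subtree at a tree address. -/
def nodeAt : Tm ⊕ Jm → List ℕ → Option (Tm ⊕ Jm)
| X, [] => some X
| X, i :: a =>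
    match (childs X)[i]? with
    | some Y => nodeAt Y a
    | none => none

/-- whether descending to child `i` introduces a fresh place symbol:
λ-bodies, jump bodies and the arguments of applications and lets do;
head positions (and μ-bodies) keep the current place. -/
def freshStep : Tm ⊕ Jm → ℕ → Bool
| .inl (.lam _ _), 0 => true
| .inl (.app _ _), 1 => true
| .inl (.lett _ _ _), 1 => true
| .inr (.jmp _ _), 0 => true
| .inr (.lett _ _ _), 1 => true
| _, _ => false

/-- a place of `M₀`: a valid address that carries a fresh place symbol. -/
def IsPlace (M₀ : Tm) (p : List ℕ) : Prop :=
  (nodeAt (.inl M₀) p).isSome ∧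
    (p = [] ∨ ∃ b i, p = b ++ [i] ∧ ∃ X, nodeAt (.inl M₀) b = some X ∧ freshStep X i)

/-- auxiliary walk computing the place marking a given address. -/
def placeWalk : Tm ⊕ Jm → List ℕ → List ℕ → List ℕ → List ℕ
| _, [], _, cur => cur
| X, i :: a, pos, cur =>
    match (childs X)[i]? with
    | none => cur
    | some Y => placeWalk Y a (pos ++ [i]) (if freshStep X i then pos ++ [i] else cur)

/-- the place marking the node at address `a`. -/
def placeOf (M₀ : Tm) (a : List ℕ) : List ℕ := placeWalk (.inl M₀) a [] []

/-- is the node at `b` a let (term-let or jump-let)? -/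
def IsLetNode : Tm ⊕ Jm → Prop
| .inl (.lett _ _ _) => True
| .inr (.lett _ _ _) => True
| _ => False

/-- `BindsAt M₀ b k c`: the innermost `μk` above the node `b` is at address `c`. -/
def BindsAt (M₀ : Tm) (b : List ℕ) (k : ℕ) (c : List ℕ) : Prop :=
  (∃ J, nodeAt (.inl M₀) c = some (.inl (.mu k J))) ∧ c <+: b ∧ c ≠ b ∧
    ∀ d, c <+: d → d <+: b → d ≠ c → ∀ J', nodeAt (.inl M₀) d ≠ some (.inl (.mu k J'))

/-- the vision relation: `Vis M₀ p q` means `q ∈ V(p)`. -/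
inductive Vis (M₀ : Tm) : List ℕ → List ℕ → Prop
| letSelf (b : List ℕ) (X : Tm ⊕ Jm) :
    nodeAt (.inl M₀) b = some X → IsLetNode X →
    Vis M₀ (b ++ [1]) (placeOf M₀ b)
| letSelfV (b : List ℕ) (X : Tm ⊕ Jm) :
    nodeAt (.inl M₀) b = some X → IsLetNode X →
    Vis M₀ (placeOf M₀ b) r → Vis M₀ (b ++ [1]) r
| letIn (b : List ℕ) (X : Tm ⊕ Jm) (q : List ℕ) :
    nodeAt (.inl M₀) b = some X → IsLetNode X →
    IsPlace M₀ q → (b ++ [0]) <+: q →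
    Vis M₀ (b ++ [1]) q
| letInV (b : List ℕ) (X : Tm ⊕ Jm) (q : List ℕ) :
    nodeAt (.inl M₀) b = some X → IsLetNode X →
    IsPlace M₀ q → (b ++ [0]) <+: q →
    Vis M₀ q r → Vis M₀ (b ++ [1]) r
| jump (b : List ℕ) (k : ℕ) (M : Tm) (c : List ℕ) :
    nodeAt (.inl M₀) b = some (.inr (.jmp k M)) →
    BindsAt M₀ b k c →
    Vis M₀ (placeOf M₀ c) r → Vis M₀ (b ++ [0]) r

/-- chains of visible places below `p`. -/
inductive Chain (M₀ : Tm) : List ℕ → ℕ → Prop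
| zero (p) : Chain M₀ p 0
| succ : Vis M₀ p q → Chain M₀ q n → Chain M₀ p (n + 1)

/-- the breadth `|p|` of a place. -/
noncomputable def breadth (M₀ : Tm) (p : List ℕ) : ℕ :=
  sSup {n | Chain M₀ p n}

mutual
/-- addresses of all μ-subterms. -/
def muAddrsT : Tm → List (List ℕ)
| .var _ => []
| .lam _ M => (muAddrsT M).map (List.cons 0)
| .app M N => (muAddrsT M).map (List.cons 0) ++ (muAddrsT N).map (List.cons 1)
| .lett M _ N => (muAddrsT M).map (List.cons 0) ++ (muAddrsT N).map (List.cons 1)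
| .mu _ J => [] :: (muAddrsJ J).map (List.cons 0)
def muAddrsJ : Jm → List (List ℕ)
| .jmp _ M => (muAddrsT M).map (List.cons 0)
| .lett J _ N => (muAddrsJ J).map (List.cons 0) ++ (muAddrsT N).map (List.cons 1)
end

namespace NaturalOps
universe u
/-- natural addition of ordinals (as in Mathlib's former `Ordinal.nadd`). -/
noncomputable def nadd : Ordinal.{u} → Ordinal.{u} → Ordinal.{u}
  | a, b =>
    max (Ordinal.blsub.{u, u} a fun a' _ => nadd a' b) (Ordinal.blsub.{u, u} b fun b' _ => nadd a b')
termination_by o₁ o₂ => (o₁, o₂)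
decreasing_by
  all_goals first
    | exact Prod.Lex.left _ _ ‹_›
    | exact Prod.Lex.right _ ‹_›
infixl:65 " ♯ " => nadd
end NaturalOps

open scoped NaturalOps in
/-- the sight of a term: the natural sum of `ω^{|p|}` over all μ-places. -/
noncomputable def sight (M₀ : Tm) : Ordinal :=
  ((muAddrsT M₀).map
    (fun a => Ordinal.omega0 ^ (breadth M₀ (placeOf M₀ a) : Ordinal))).foldr (· ♯ ·) 0

/-!
Each associativity axiom is sent to dot-terms that differ only by a reassociation of dots,
possibly inside the continuation handed to a subterm. The induction on the derivation of
`EqT`/`EqJ` therefore carries a stronger invariant: the translations agree for any two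
dot-equal continuations, and the two sides have the same value-hood, free variables and free
continuation variables, since the fresh names chosen by the translation depend on these.
-/

theorem DEq.fvL_eq {M N : Lam} (h : DEq M N) : fvL M = fvL N := by
  induction h with
  | refl => rfl
  | symm _ ih => exact ih.symm
  | trans _ _ ih₁ ih₂ => exact ih₁.trans ih₂
  | assoc => simp only [fvL, Finset.union_assoc]
  | lam _ ih => simp only [fvL, ih]
  | appl _ _ ih₁ ih₂ | dot _ _ ih₁ ih₂ => simp only [fvL, ih₁, ih₂]

theorem til_congr {K K' : Lam} (h : DEq K K') : DEq (til K) (til K') := by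
  induction h with
  | refl => exact .refl _
  | symm _ ih => exact ih.symm
  | trans _ _ ih₁ ih₂ => exact ih₁.trans ih₂
  | assoc L M N => exact .assoc L M N
  | lam h _ => exact h
  | appl h₁ h₂ => exact .appl h₁ h₂
  | dot h₁ h₂ => exact .dot h₁ h₂

theorem appW_congr {W₁ W₂ K K' V₁ V₂ : Lam} (hW : DEq W₁ W₂) (hK : DEq K K')
    (hV : DEq V₁ V₂) : DEq (appW W₁ K V₁) (appW W₂ K' V₂) :=
  .appl (.appl (.appl hW hK) (til_congr hK)) hV

theorem psub_congr_subst (M : Lam) {ρ ρ' : ℕ → Option Lam}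
    (h : ∀ v, Option.Rel DEq (ρ v) (ρ' v)) : DEq (psub M ρ) (psub M ρ') := by
  induction M generalizing ρ ρ' with
  | var x =>
    have hx := h x
    simp only [psub]
    generalize ρ x = a, ρ' x = b at hx ⊢
    obtain ⟨hx⟩ | _ := hx
    exacts [hx, .refl _]
  | lam x M ih =>
    refine .lam (ih fun y => ?_)
    split_ifs
    exacts [.none, h y]
  | app M N ihM ihN => exact .appl (ihM h) (ihN h)
  | dot M N ihM ihN => exact .dot (ihM h) (ihN h)

theorem DEq.psub {M M' : Lam} (h : DEq M M') (ρ : ℕ → Option Lam) :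
    DEq (CCV.psub M ρ) (CCV.psub M' ρ) := by
  induction h generalizing ρ with
  | refl => exact .refl _
  | symm _ ih => exact (ih ρ).symm
  | trans _ _ ih₁ ih₂ => exact (ih₁ ρ).trans (ih₂ ρ)
  | assoc => exact .assoc _ _ _
  | lam _ ih => exact .lam (ih _)
  | appl _ _ ih₁ ih₂ => exact .appl (ih₁ ρ) (ih₂ ρ)
  | dot _ _ ih₁ ih₂ => exact .dot (ih₁ ρ) (ih₂ ρ)

def TrbCongr (M M' : Tm) : Prop :=
  ∀ ⦃K K' : Lam⦄, DEq K K' → DEq (trb M K) (trb M' K')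

theorem TrbCongr.symm {M M' : Tm} (h : TrbCongr M M') : TrbCongr M' M :=
  fun _ _ hK => (h hK.symm).symm

theorem TrbCongr.trans {M N P : Tm} (h₁ : TrbCongr M N) (h₂ : TrbCongr N P) :
    TrbCongr M P :=
  fun K _ hK => (h₁ (.refl K)).trans (h₂ hK)

structure TrEquiv (M M' : Tm) : Prop where
  trb_congr : TrbCongr M M'
  starb_deq : DEq (starb M) (starb M')
  isVal_eq : isVal M = isVal M'
  fvT_eq : fvT M = fvT M'
  fcT_eq : fcT M = fcT M'

structure TrEquivJ (J J' : Jm) : Prop where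
  trbJ_deq : DEq (trbJ J) (trbJ J')
  fvJ_eq : fvJ J = fvJ J'
  fcJ_eq : fcJ J = fcJ J'

/-- `K̃·⟪(P where z := N)⟫[K]`, the shape into which `⟪·⟫` unfolds an application with a
non-value component `N`. -/
theorem dot_til_trb_congr {K K' P P' : Lam} {N N' : Tm} (z : ℕ) (hK : DEq K K')
    (hP : DEq P P') (hN : TrbCongr N N') :
    DEq (.dot (til K) (.dot P (trb N (.lam z (.dot (til K) P)))))
      (.dot (til K') (.dot P' (trb N' (.lam z (.dot (til K') P'))))) :=
  .dot (til_congr hK) (.dot hP (hN (.lam (.dot (til_congr hK) hP))))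

theorem trb_app_congr {M M' N N' : Tm} (hM : TrEquiv M M') (hN : TrEquiv N N') :
    TrbCongr (.app M N) (.app M' N') := by
  intro K K' hK
  have hz : zf M' N' K' = zf M N K := by simp only [zf, hM.fvT_eq, hN.fvT_eq, hK.fvL_eq]
  simp only [trb, hz, ← hM.isVal_eq, ← hN.isVal_eq]
  cases isVal M <;> cases isVal N <;> simp only [Bool.false_eq_true, ite_true, ite_false]
  · exact dot_til_trb_congr _ hK
      (dot_til_trb_congr _ hK (appW_congr (.refl _) hK (.refl _)) hN.trb_congr) hM.trb_congr
  · exact dot_til_trb_congr _ hK (appW_congr (.refl _) hK hN.starb_deq) hM.trb_congr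
  · exact dot_til_trb_congr _ hK (appW_congr hM.starb_deq hK (.refl _)) hN.trb_congr
  · exact appW_congr hM.starb_deq hK hN.starb_deq

theorem starb_lam_congr {M M' : Tm} (x : ℕ) (h : TrbCongr M M') (hfc : fcT M = fcT M') :
    DEq (starb (.lam x M)) (starb (.lam x M')) := by
  simp only [starb, hfc]
  exact .lam (.lam (.lam (.dot (h (.refl _)) (.appl (.lam (.dot (.refl _) (h (.refl _))))
    (.refl _)))))

theorem trb_lam_congr {M M' : Tm} (x : ℕ) (h : TrbCongr M M') (hfc : fcT M = fcT M') :
    TrbCongr (.lam x M) (.lam x M') := by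
  intro K K' hK
  simp only [trb]
  exact .appl hK (starb_lam_congr x h hfc)

theorem trb_lett_congr {L L' N N' : Tm} (x : ℕ) (hL : TrbCongr L L') (hN : TrbCongr N N') :
    TrbCongr (.lett L x N) (.lett L' x N') := by
  intro K K' hK
  simp only [trb]
  exact .dot (hL hK) (hN (.lam (.dot (til_congr hK) (hL hK))))

theorem trb_mu_congr {J J' : Jm} (k : ℕ) (h : DEq (trbJ J) (trbJ J')) :
    TrbCongr (.mu k J) (.mu k J') := by
  intro K K' hK
  simp only [trb]
  refine .dot (til_congr hK) ((h.psub _).trans (psub_congr_subst _ fun v => ?_))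
  split_ifs
  exacts [.some hK, .some (til_congr hK), .none]

theorem trbCongr_refl : ∀ M : Tm, TrbCongr M M
  | .var _ => fun _ _ hK => by simp only [trb]; exact .appl hK (.refl _)
  | .lam x M => trb_lam_congr x (trbCongr_refl M) rfl
  | .app M N =>
    trb_app_congr ⟨trbCongr_refl M, .refl _, rfl, rfl, rfl⟩
      ⟨trbCongr_refl N, .refl _, rfl, rfl, rfl⟩
  | .lett L x N => trb_lett_congr x (trbCongr_refl L) (trbCongr_refl N)
  | .mu k _ => trb_mu_congr k (.refl _)

theorem TrbCongr.of_deq {M M' : Tm} (h : ∀ K, DEq (trb M K) (trb M' K)) : TrbCongr M M' :=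
  fun _ K' hK => (trbCongr_refl M hK).trans (h K')

namespace TrEquiv

theorem refl (M : Tm) : TrEquiv M M := ⟨trbCongr_refl M, .refl _, rfl, rfl, rfl⟩

theorem symm {M M' : Tm} (h : TrEquiv M M') : TrEquiv M' M :=
  ⟨h.trb_congr.symm, h.starb_deq.symm, h.isVal_eq.symm, h.fvT_eq.symm, h.fcT_eq.symm⟩

theorem trans {M N P : Tm} (h₁ : TrEquiv M N) (h₂ : TrEquiv N P) : TrEquiv M P :=
  ⟨h₁.trb_congr.trans h₂.trb_congr, h₁.starb_deq.trans h₂.starb_deq,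
    h₁.isVal_eq.trans h₂.isVal_eq, h₁.fvT_eq.trans h₂.fvT_eq, h₁.fcT_eq.trans h₂.fcT_eq⟩

theorem lett_assoc (L : Tm) (x : ℕ) (M : Tm) {y : ℕ} (N : Tm) (hy : y ∉ fvT L) :
    TrEquiv (.lett L x (.lett M y N)) (.lett (.lett L x M) y N) := by
  refine ⟨.of_deq fun K => ?_, by simp only [starb]; exact .refl _, rfl, ?_, ?_⟩
  · simp only [trb, til]
    exact (DEq.dot (.refl _) (.dot (.refl _) (trbCongr_refl N (.lam (.assoc _ _ _))))).trans
      (.symm (.assoc _ _ _))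
  · have hy' : y ∉ fvT L \ {x} := fun h => hy (Finset.mem_sdiff.1 h).1
    simp only [fvT]
    rw [Finset.union_sdiff_distrib, Finset.sdiff_singleton_eq_erase y (fvT L \ {x}),
      Finset.erase_eq_self.2 hy', Finset.union_assoc]
  · simp only [fcT, Finset.union_assoc]

theorem lam {M M' : Tm} (x : ℕ) (h : TrEquiv M M') : TrEquiv (.lam x M) (.lam x M') :=
  ⟨trb_lam_congr x h.trb_congr h.fcT_eq, starb_lam_congr x h.trb_congr h.fcT_eq, rfl,
    by simp only [fvT, h.fvT_eq], by simp only [fcT, h.fcT_eq]⟩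

theorem app {M M' N N' : Tm} (hM : TrEquiv M M') (hN : TrEquiv N N') :
    TrEquiv (.app M N) (.app M' N') :=
  ⟨trb_app_congr hM hN, by simp only [starb]; exact .refl _, rfl, by simp only [fvT, hM.fvT_eq, hN.fvT_eq],
    by simp only [fcT, hM.fcT_eq, hN.fcT_eq]⟩

theorem lett {M M' N N' : Tm} (x : ℕ) (hM : TrEquiv M M') (hN : TrEquiv N N') :
    TrEquiv (.lett M x N) (.lett M' x N') :=
  ⟨trb_lett_congr x hM.trb_congr hN.trb_congr, by simp only [starb]; exact .refl _, rfl,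
    by simp only [fvT, hM.fvT_eq, hN.fvT_eq], by simp only [fcT, hM.fcT_eq, hN.fcT_eq]⟩

end TrEquiv

namespace TrEquivJ

theorem refl (J : Jm) : TrEquivJ J J := ⟨.refl _, rfl, rfl⟩

theorem symm {J J' : Jm} (h : TrEquivJ J J') : TrEquivJ J' J :=
  ⟨h.trbJ_deq.symm, h.fvJ_eq.symm, h.fcJ_eq.symm⟩

theorem trans {J J' J'' : Jm} (h₁ : TrEquivJ J J') (h₂ : TrEquivJ J' J'') : TrEquivJ J J'' :=
  ⟨h₁.trbJ_deq.trans h₂.trbJ_deq, h₁.fvJ_eq.trans h₂.fvJ_eq, h₁.fcJ_eq.trans h₂.fcJ_eq⟩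

theorem jmp_lett (k : ℕ) (L : Tm) (x : ℕ) (M : Tm) :
    TrEquivJ (.jmp k (.lett L x M)) (.lett (.jmp k L) x M) := by
  refine ⟨?_, by simp only [fvJ, fvT], ?_⟩
  · simp only [trbJ, trb, til]
    exact .symm (.assoc _ _ _)
  · simp only [fcJ, fcT, Finset.insert_union]

theorem jmp {M M' : Tm} (k : ℕ) (h : TrEquiv M M') : TrEquivJ (.jmp k M) (.jmp k M') :=
  ⟨by simp only [trbJ]; exact .dot (.refl _) (h.trb_congr (.refl _)), by simp only [fvJ, h.fvT_eq],
    by simp only [fcJ, h.fcT_eq]⟩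

theorem lett {J J' : Jm} {N N' : Tm} (x : ℕ) (hJ : TrEquivJ J J') (hN : TrEquiv N N') :
    TrEquivJ (.lett J x N) (.lett J' x N') :=
  ⟨by simp only [trbJ]; exact .dot hJ.trbJ_deq (hN.trb_congr (.lam hJ.trbJ_deq)),
    by simp only [fvJ, hJ.fvJ_eq, hN.fvT_eq], by simp only [fcJ, hJ.fcJ_eq, hN.fcT_eq]⟩

theorem mu {J J' : Jm} (k : ℕ) (h : TrEquivJ J J') : TrEquiv (.mu k J) (.mu k J') :=
  ⟨trb_mu_congr k h.trbJ_deq, by simp only [starb]; exact .refl _, rfl, by simp only [fvT, h.fvJ_eq],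
    by simp only [fcT, h.fcJ_eq]⟩

end TrEquivJ

mutual

theorem EqT.trEquiv {M M' : Tm} : EqT M M' → TrEquiv M M'
  | .refl M => .refl M
  | .symm h => h.trEquiv.symm
  | .trans h₁ h₂ => h₁.trEquiv.trans h₂.trEquiv
  | .assoc L x M _ N hy => .lett_assoc L x M N hy
  | .lam h => h.trEquiv.lam _
  | .app h₁ h₂ => h₁.trEquiv.app h₂.trEquiv
  | .lett h₁ h₂ => h₁.trEquiv.lett _ h₂.trEquiv
  | .mu h => h.trEquivJ.mu _

theorem EqJ.trEquivJ {J J' : Jm} : EqJ J J' → TrEquivJ J J'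
  | .refl J => .refl J
  | .symm h => h.trEquivJ.symm
  | .trans h₁ h₂ => h₁.trEquivJ.trans h₂.trEquivJ
  | .assoc k L x M => .jmp_lett k L x M
  | .jmp h => .jmp _ h.trEquiv
  | .lett h₁ h₂ => h₁.trEquivJ.lett _ h₂.trEquiv

end

/-- the translation `⟪·⟫` respects the syntactic equality axioms
of the CCV λμ-calculus (up to associativity of the dot operator). -/
theorem trb_respects_syntactic_equality :
    (∀ M₁ M₂ : Tm, EqT M₁ M₂ → ∀ K : Lam, IsCont K →
      DEq (trb M₁ K) (trb M₂ K)) ∧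
    (∀ J₁ J₂ : Jm, EqJ J₁ J₂ → DEq (trbJ J₁) (trbJ J₂)) :=
  ⟨fun _ _ h K _ => h.trEquiv.trb_congr (.refl K), fun _ _ h => h.trEquivJ.trbJ_deq⟩

end CCV
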